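/- Let ρ be a d×d complex density matrix, ψ ∈ ℂ^d a unit vector, and α > 0. Let E_d := λ_min(ρ − α|ψ⟩⟨ψ|) denote the smallest eigenvalue. If E_d ≤ 0, then the trace norm satisfies ‖ρ − α·|ψ⟩⟨ψ|‖₁ = 1 − α − 2·E_d. Consequently, the Helstrom error P_err = (1 − |γ|·‖ρ − α|ψ⟩⟨ψ|‖₁)/2 is a strictly increasing affine function of E_d, so minimizing the error is equivalent to minimizing the smallest eigenvalue E_d. -/

import Mathlib

open Matrix BigOperators ComplexOrder

/-- The trace norm of a Hermitian matrix: the sum of the absolute values of its eigenvalues. -/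
noncomputable def traceNorm {n : Type*} [Fintype n] [DecidableEq n]
    {A : Matrix n n ℂ} (hA : A.IsHermitian) : ℝ :=
  ∑ i, |hA.eigenvalues i|

/-!
On the hyperplane `ψ^⊥` the matrix `ρ - α|ψ⟩⟨ψ|` acts as `ρ`, so its quadratic form is
nonnegative there. Two orthonormal eigenvectors with negative eigenvalues would span a plane
meeting `ψ^⊥` in a nonzero vector on which the form is negative; hence only the smallest
eigenvalue `E_d` can be negative. Then `‖ρ - α|ψ⟩⟨ψ|‖₁ = ∑ λᵢ - 2 E_d = tr(ρ - α|ψ⟩⟨ψ|) - 2 E_d`.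
-/

theorem sum_abs_eq_sum_sub_two_mul {ι : Type*} [Fintype ι] {f : ι → ℝ} {k : ι}
    (hk : f k ≤ 0) (hf : ∀ i ≠ k, 0 ≤ f i) : ∑ i, |f i| = ∑ i, f i - 2 * f k := by
  classical
  rw [← Finset.add_sum_erase _ _ (Finset.mem_univ k),
    ← Finset.add_sum_erase _ f (Finset.mem_univ k), abs_of_nonpos hk,
    Finset.sum_congr rfl fun i hi => abs_of_nonneg (hf i (Finset.ne_of_mem_erase hi))]
  ring

namespace Matrix

variable {𝕜 n : Type*} [RCLike 𝕜] [Fintype n]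

theorem trace_vecMulVec_self_star (ψ : n → 𝕜) :
    (vecMulVec ψ (star ψ)).trace = ((∑ i, ‖ψ i‖ ^ 2 : ℝ) : 𝕜) := by
  simp [dotProduct, RCLike.mul_conj]

theorem sub_smul_vecMulVec_self_star_mulVec {R : Type*} [DistribSMul R 𝕜] [IsScalarTower R 𝕜 𝕜]
    (A : Matrix n n 𝕜) (c : R) {ψ u : n → 𝕜} (hu : star ψ ⬝ᵥ u = 0) :
    (A - c • vecMulVec ψ (star ψ)) *ᵥ u = A *ᵥ u := by
  rw [sub_mulVec, smul_mulVec, vecMulVec_mulVec, hu]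
  simp

namespace IsHermitian

variable [DecidableEq n] {A : Matrix n n 𝕜} (hA : A.IsHermitian)

theorem sum_eigenvalues_eq_re_trace : ∑ i, hA.eigenvalues i = RCLike.re A.trace := by
  simp [hA.trace_eq_sum_eigenvalues]

theorem star_eigenvectorBasis_dotProduct (i j : n) :
    star ⇑(hA.eigenvectorBasis i) ⬝ᵥ ⇑(hA.eigenvectorBasis j) = if i = j then 1 else 0 := by
  rw [dotProduct_comm, ← EuclideanSpace.inner_eq_star_dotProduct]
  exact orthonormal_iff_ite.mp hA.eigenvectorBasis.orthonormal i j

theorem star_dotProduct_mulVec_eigenvectorBasis_combination {i j : n} (hij : i ≠ j) (a b : 𝕜) :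
    star (a • ⇑(hA.eigenvectorBasis i) + b • ⇑(hA.eigenvectorBasis j)) ⬝ᵥ
        (A *ᵥ (a • ⇑(hA.eigenvectorBasis i) + b • ⇑(hA.eigenvectorBasis j))) =
      ((‖a‖ ^ 2 * hA.eigenvalues i + ‖b‖ ^ 2 * hA.eigenvalues j : ℝ) : 𝕜) := by
  simp only [mulVec_add, mulVec_smul, mulVec_eigenvectorBasis, star_add, star_smul, add_dotProduct,
    dotProduct_add, smul_dotProduct, dotProduct_smul, star_eigenvectorBasis_dotProduct, if_neg hij,
    if_neg (Ne.symm hij)]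
  simp only [if_true, smul_eq_mul, mul_one, mul_zero, add_zero, zero_add,
    RCLike.real_smul_eq_coe_mul, RCLike.star_def]
  push_cast
  linear_combination
    (hA.eigenvalues i : 𝕜) * RCLike.mul_conj a + (hA.eigenvalues j : 𝕜) * RCLike.mul_conj b

theorem eq_of_eigenvalues_neg_of_re_nonneg_on_orthogonal (ψ : n → 𝕜)
    (hψ : ∀ u, star ψ ⬝ᵥ u = 0 → 0 ≤ RCLike.re (star u ⬝ᵥ (A *ᵥ u)))
    {i j : n} (hi : hA.eigenvalues i < 0) (hj : hA.eigenvalues j < 0) : i = j := by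
  by_contra hij
  set v := ⇑(hA.eigenvectorBasis i)
  set w := ⇑(hA.eigenvectorBasis j)
  obtain ⟨a, b, hab, horth⟩ : ∃ a b : 𝕜, (a ≠ 0 ∨ b ≠ 0) ∧ star ψ ⬝ᵥ (a • v + b • w) = 0 := by
    by_cases hv : star ψ ⬝ᵥ v = 0
    · exact ⟨1, 0, Or.inl one_ne_zero, by simp [hv]⟩
    · refine ⟨star ψ ⬝ᵥ w, -(star ψ ⬝ᵥ v), Or.inr (neg_ne_zero.mpr hv), ?_⟩
      simp only [dotProduct_add, dotProduct_smul, smul_eq_mul]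
      ring
  have hform := hψ _ horth
  rw [hA.star_dotProduct_mulVec_eigenvectorBasis_combination hij, RCLike.ofReal_re] at hform
  rcases hab with ha | hb
  · have : 0 < ‖a‖ ^ 2 := by positivity
    nlinarith [sq_nonneg ‖b‖]
  · have : 0 < ‖b‖ ^ 2 := by positivity
    nlinarith [sq_nonneg ‖a‖]

end IsHermitian

theorem PosSemidef.eq_of_eigenvalues_sub_smul_vecMulVec_neg [DecidableEq n] {R : Type*}
    [DistribSMul R 𝕜] [IsScalarTower R 𝕜 𝕜] {ρ : Matrix n n 𝕜} (hρ : ρ.PosSemidef) (ψ : n → 𝕜)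
    (α : R) (hM : (ρ - α • vecMulVec ψ (star ψ)).IsHermitian)
    {i j : n} (hi : hM.eigenvalues i < 0) (hj : hM.eigenvalues j < 0) : i = j :=
  hM.eq_of_eigenvalues_neg_of_re_nonneg_on_orthogonal ψ (fun u hu => by
    rw [sub_smul_vecMulVec_self_star_mulVec _ _ hu]; exact hρ.re_dotProduct_nonneg u) hi hj

end Matrix

theorem trace_norm_via_min_eigenvalue_general {d : ℕ}
    (ρ : Matrix (Fin d) (Fin d) ℂ) (hρ : ρ.PosSemidef) (hρtr : ρ.trace = 1)
    (ψ : Fin d → ℂ) (hψ : ∑ i, ‖ψ i‖ ^ 2 = 1)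
    (α : ℝ)
    (hM : (ρ - α • vecMulVec ψ (star ψ)).IsHermitian)
    (Ed : ℝ) (hle : ∀ i, Ed ≤ hM.eigenvalues i) (hmem : ∃ i, hM.eigenvalues i = Ed)
    (hEd : Ed ≤ 0) (γ : ℝ) :
    traceNorm hM = 1 - α - 2 * Ed ∧
      (1 - |γ| * traceNorm hM) / 2 = (1 - |γ| * (1 - α - 2 * Ed)) / 2 ∧
      (γ ≠ 0 → StrictMono fun E : ℝ => (1 - |γ| * (1 - α - 2 * E)) / 2) := by
  obtain ⟨k, rfl⟩ := hmem
  have hsum : ∑ i, hM.eigenvalues i = 1 - α := by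
    rw [hM.sum_eigenvalues_eq_re_trace, trace_sub, trace_smul, hρtr,
      trace_vecMulVec_self_star, hψ]
    simp
  have hnonneg : ∀ i ≠ k, 0 ≤ hM.eigenvalues i := fun i hik => by
    by_contra! hneg
    exact hik (hρ.eq_of_eigenvalues_sub_smul_vecMulVec_neg ψ α hM hneg ((hle i).trans_lt hneg))
  have hnorm : traceNorm hM = 1 - α - 2 * hM.eigenvalues k := by
    rw [traceNorm, sum_abs_eq_sum_sub_two_mul hEd hnonneg, hsum]
  refine ⟨hnorm, by rw [hnorm], fun hγ x y hxy => ?_⟩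
  have := abs_pos.mpr hγ
  dsimp only
  nlinarith

/-- **Trace norm via the smallest eigenvalue.** Let `ρ` be a density matrix, `ψ` a unit
vector, `α > 0`, and let `E_d := λ_min(ρ − α|ψ⟩⟨ψ|)`. If `E_d ≤ 0`, then
`‖ρ − α|ψ⟩⟨ψ|‖₁ = 1 − α − 2E_d`; consequently the Helstrom error
`(1 − |γ|·‖ρ − α|ψ⟩⟨ψ|‖₁)/2` equals `(1 − |γ|(1 − α − 2E_d))/2`, which (for `γ ≠ 0`)
is a strictly increasing affine function of `E_d`, so minimizing the error is equivalent
to minimizing the smallest eigenvalue `E_d`. -/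
theorem trace_norm_via_min_eigenvalue {d : ℕ}
    (ρ : Matrix (Fin d) (Fin d) ℂ) (hρ : ρ.PosSemidef) (hρtr : ρ.trace = 1)
    (ψ : Fin d → ℂ) (hψ : ∑ i, ‖ψ i‖ ^ 2 = 1)
    (α : ℝ) (hα : 0 < α)
    (hM : (ρ - α • vecMulVec ψ (star ψ)).IsHermitian)
    (Ed : ℝ) (hle : ∀ i, Ed ≤ hM.eigenvalues i) (hmem : ∃ i, hM.eigenvalues i = Ed)
    (hEd : Ed ≤ 0) (γ : ℝ) :
    traceNorm hM = 1 - α - 2 * Ed ∧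
      (1 - |γ| * traceNorm hM) / 2 = (1 - |γ| * (1 - α - 2 * Ed)) / 2 ∧
      (γ ≠ 0 → StrictMono fun E : ℝ => (1 - |γ| * (1 - α - 2 * E)) / 2) :=
  trace_norm_via_min_eigenvalue_general ρ hρ hρtr ψ hψ α hM Ed hle hmem hEd γ
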